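/- arXiv:2605.28406 — 6 statements merged into one kernel-verified Lean document; each statement's English description precedes it below -/
import Mathlib

section
/- For integers $d \geq d_{k^*} \geq 1$ and $0 \leq s \leq d_{k^*}-1$, one has $\sum_{m=0}^{d-d_{k^*}} \binom{d-d_{k^*}}{m} \binom{d_{k^*}-1}{s} \binom{d-1}{s+m}^{-1} = \frac{d}{d_{k^*}}$. -/
open Finset PowerSeries

lemma aux_conv (p q n : ℕ) :
    ∑ k ∈ Finset.range (n+1), ((p+k).choose p : ℚ) * ((q+(n-k)).choose q : ℚ)
      = ((p+q+1+n).choose (p+q+1) : ℚ) := by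
  have h : (PowerSeries.mk fun k => ((p+k).choose p : ℚ)) *
      (PowerSeries.mk fun k => ((q+k).choose q : ℚ))
      = PowerSeries.mk fun k => (((p+q+1)+k).choose (p+q+1) : ℚ) := by
    rw [← PowerSeries.mk_one_pow_eq_mk_choose_add, ← PowerSeries.mk_one_pow_eq_mk_choose_add,
      ← PowerSeries.mk_one_pow_eq_mk_choose_add, ← pow_add]
    ring_nf
  have h2 := congrArg (PowerSeries.coeff n) h
  rw [PowerSeries.coeff_mul, PowerSeries.coeff_mk,
    Finset.Nat.sum_antidiagonal_eq_sum_range_succ_mk] at h2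
  simpa using h2

lemma aux_term (a b s m : ℕ) (hm : m ≤ a) (hs : s ≤ b) :
    ((a.choose m : ℚ)) * (b.choose s : ℚ) / ((a+b).choose (s+m) : ℚ)
      = ((s+m).choose s : ℚ) * (((b-s)+(a-m)).choose (b-s) : ℚ) / ((a+b).choose a : ℚ) := by
  have h1 : (a.choose m : ℚ) = a.factorial / (m.factorial * (a-m).factorial) :=
    Nat.cast_choose ℚ hm
  have h2 : (b.choose s : ℚ) = b.factorial / (s.factorial * (b-s).factorial) :=
    Nat.cast_choose ℚ hs
  have h3 : ((a+b).choose (s+m) : ℚ)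
      = (a+b).factorial / ((s+m).factorial * ((b-s)+(a-m)).factorial) := by
    have := Nat.cast_choose ℚ (show s+m ≤ a+b by omega)
    rwa [show a+b-(s+m) = (b-s)+(a-m) by omega] at this
  have h4 : ((s+m).choose s : ℚ) = (s+m).factorial / (s.factorial * m.factorial) := by
    have := Nat.cast_choose ℚ (show s ≤ s+m by omega)
    rwa [show s+m-s = m by omega] at this
  have h5 : (((b-s)+(a-m)).choose (b-s) : ℚ)
      = ((b-s)+(a-m)).factorial / ((b-s).factorial * (a-m).factorial) := by
    have := Nat.cast_choose ℚ (show b-s ≤ (b-s)+(a-m) by omega)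
    rwa [show (b-s)+(a-m)-(b-s) = a-m by omega] at this
  have h6 : ((a+b).choose a : ℚ) = (a+b).factorial / (a.factorial * b.factorial) := by
    have := Nat.cast_choose ℚ (show a ≤ a+b by omega)
    rwa [show a+b-a = b by omega] at this
  rw [h1, h2, h3, h4, h5, h6]
  have f : ∀ n : ℕ, (n.factorial : ℚ) ≠ 0 := fun n => by positivity
  field_simp

/-- Aggregated Shapley weight identity:
`∑_{m=0}^{d-d'} C(d-d', m) C(d'-1, s) / C(d-1, s+m) = d / d'`. -/
theorem shapley_weight_sum (d d' s : ℕ) (h1 : 1 ≤ d') (h2 : d' ≤ d) (hs : s ≤ d' - 1) :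
    ∑ m ∈ Finset.range (d - d' + 1),
      (Nat.choose (d - d') m : ℚ) * (Nat.choose (d' - 1) s : ℚ) / (Nat.choose (d - 1) (s + m) : ℚ)
      = (d : ℚ) / (d' : ℚ) := by
  set a := d - d' with ha
  set b := d' - 1 with hb
  have hab : d - 1 = a + b := by omega
  have hd : (d : ℚ) = ((a + b + 1 : ℕ) : ℚ) := by rw [show a + b + 1 = d by omega]
  have hd' : (d' : ℚ) = ((b + 1 : ℕ) : ℚ) := by rw [show b + 1 = d' by omega]
  rw [hab, hd, hd']
  have hsb : s ≤ b := hs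
  calc ∑ m ∈ Finset.range (a + 1),
        ((a.choose m : ℚ)) * (b.choose s : ℚ) / ((a+b).choose (s+m) : ℚ)
      = ∑ m ∈ Finset.range (a + 1),
        ((s+m).choose s : ℚ) * (((b-s)+(a-m)).choose (b-s) : ℚ) / ((a+b).choose a : ℚ) := by
        refine Finset.sum_congr rfl fun m hm => ?_
        exact aux_term a b s m (by simpa [Nat.lt_succ_iff] using hm) hsb
    _ = (∑ m ∈ Finset.range (a + 1),
        ((s+m).choose s : ℚ) * (((b-s)+(a-m)).choose (b-s) : ℚ)) / ((a+b).choose a : ℚ) := by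
        rw [Finset.sum_div]
    _ = ((s+(b-s)+1+a).choose (s+(b-s)+1) : ℚ) / ((a+b).choose a : ℚ) := by
        rw [aux_conv s (b-s) a]
    _ = ((b+1+a).choose (b+1) : ℚ) / ((a+b).choose a : ℚ) := by
        rw [show s+(b-s) = b by omega]
    _ = ((a + b + 1 : ℕ) : ℚ) / ((b + 1 : ℕ) : ℚ) := by
        have e1 : ((b+1+a).choose (b+1) : ℚ)
            = (b+1+a).factorial / ((b+1).factorial * a.factorial) := by
          have := Nat.cast_choose ℚ (show b+1 ≤ b+1+a by omega)
          rwa [show b+1+a-(b+1) = a by omega] at this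
        have e2 : ((a+b).choose a : ℚ) = (a+b).factorial / (a.factorial * b.factorial) := by
          have := Nat.cast_choose ℚ (show a ≤ a+b by omega)
          rwa [show a+b-a = b by omega] at this
        have e3 : (b+1+a).factorial = (a+b+1) * (a+b).factorial := by
          rw [show b+1+a = (a+b)+1 by omega, Nat.factorial_succ]
        have e4 : (b+1).factorial = (b+1) * b.factorial := Nat.factorial_succ b
        rw [e1, e2, e3, e4]
        have f : ∀ n : ℕ, (n.factorial : ℚ) ≠ 0 := fun n => by positivity
        push_cast
        field_simp
end

section
/- Let $d_1, \ldots, d_K$ be nonnegative integers with $d = d_1 + \cdots + d_K$, fix $k^*$ with $d_{k^*} \geq 1$, and fix $0 \leq s \leq d_{k^*}-1$. Then $\sum_{q_1=0}^{d_1} \cdots \widehat{\sum_{q_{k^*}}} \cdots \sum_{q_K=0}^{d_K} \left(\prod_{k \neq k^*} \binom{d_k}{q_k}\right) \binom{d-1}{s + \sum_{k \neq k^*} q_k}^{-1} = \binom{d_{k^*}-1}{s}^{-1} \frac{d}{d_{k^*}}$, where the sum over $q_{k^*}$ is omitted. -/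
open Finset

section ShapleyAux
open Polynomial


lemma nat_id (n s : ℕ) (h : s + 1 ≤ n) :
    (n+1).choose (s+1) * (n * (n-1).choose s) = ((n+1) * n.choose s) * (n.choose (s+1)) := by
  have h1 : (n+1) * n.choose s = (n+1).choose (s+1) * (s+1) := Nat.add_one_mul_choose_eq n s
  have hn : n - 1 + 1 = n := by omega
  have h2 : n * (n-1).choose s = n.choose (s+1) * (s+1) := by
    have := Nat.add_one_mul_choose_eq (n-1) s
    simp only [Nat.succ_eq_add_one, hn] at this
    exact this
  rw [h1, h2]; ring

lemma inv_id (n s : ℕ) (h : s + 1 ≤ n) :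
    ((n.choose s : ℚ))⁻¹ + ((n.choose (s+1) : ℚ))⁻¹
      = (n+1) / ((n : ℚ) * ((n-1).choose s)) := by
  have c1 : (n.choose s : ℚ) ≠ 0 := by
    exact_mod_cast (Nat.choose_pos (by omega : s ≤ n)).ne'
  have c2 : (n.choose (s+1) : ℚ) ≠ 0 := by
    exact_mod_cast (Nat.choose_pos h).ne'
  have c3 : ((n-1).choose s : ℚ) ≠ 0 := by
    exact_mod_cast (Nat.choose_pos (by omega : s ≤ n - 1)).ne'
  have c4 : (n : ℚ) ≠ 0 := by exact_mod_cast (by omega : n ≠ 0)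
  have pascal : (n.choose s : ℚ) + n.choose (s+1) = (n+1).choose (s+1) := by
    exact_mod_cast (Nat.choose_succ_succ n s).symm
  have key : ((n+1).choose (s+1) : ℚ) * (n * (n-1).choose s)
      = ((n+1) * n.choose s) * (n.choose (s+1)) := by
    exact_mod_cast congrArg (Nat.cast : ℕ → ℚ) (nat_id n s h)
  field_simp
  rw [add_comm ((n.choose (s+1) : ℚ)) ((n.choose s : ℚ)), pascal]
  linear_combination key

lemma choose_rec (M : ℕ) (g : ℕ → ℚ) :
    ∑ Q ∈ Finset.range (M+2), ((M+1).choose Q : ℚ) * g Q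
      = ∑ Q ∈ Finset.range (M+1), (M.choose Q : ℚ) * g Q
        + ∑ Q ∈ Finset.range (M+1), (M.choose Q : ℚ) * g (Q+1) := by
  have hA : ∑ Q ∈ Finset.range (M+1), (M.choose Q : ℚ) * g Q
      = ∑ Q ∈ Finset.range (M+1), (M.choose (Q+1) : ℚ) * g (Q+1) + (M.choose 0 : ℚ) * g 0 := by
    have h1 := Finset.sum_range_succ' (fun Q => (M.choose Q : ℚ) * g Q) (M+1)
    have h2 : ∑ Q ∈ Finset.range (M+1+1), (M.choose Q : ℚ) * g Q
        = ∑ Q ∈ Finset.range (M+1), (M.choose Q : ℚ) * g Q := by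
      rw [Finset.sum_range_succ]; simp [Nat.choose_eq_zero_of_lt]
    rw [← h2, h1]
  rw [Finset.sum_range_succ' (fun Q => ((M+1).choose Q : ℚ) * g Q) (M+1)]
  have hsplit : ∀ Q ∈ Finset.range (M+1), ((M+1).choose (Q+1) : ℚ) * g (Q+1)
      = (M.choose Q : ℚ) * g (Q+1) + (M.choose (Q+1) : ℚ) * g (Q+1) := by
    intro Q _
    have : ((M+1).choose (Q+1) : ℚ) = (M.choose Q : ℚ) + (M.choose (Q+1) : ℚ) := by
      exact_mod_cast Nat.choose_succ_succ M Q
    rw [this, add_mul]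
  rw [Finset.sum_congr rfl hsplit, Finset.sum_add_distrib, hA]
  have hB : ∑ Q ∈ Finset.range (M+2), (M.choose Q : ℚ) * g Q
      = ∑ Q ∈ Finset.range (M+1), (M.choose Q : ℚ) * g Q := by
    rw [Finset.sum_range_succ]; simp [Nat.choose_eq_zero_of_lt]
  simp only [Nat.choose_zero_right, Nat.cast_one, one_mul]
  ring

lemma key_sum (M : ℕ) : ∀ (s n : ℕ), s ≤ n →
    ∑ Q ∈ Finset.range (M+1), ((M.choose Q : ℚ)) / (((M+n).choose (s+Q) : ℚ))
      = ((M:ℚ)+n+1) / (((n:ℚ)+1) * (n.choose s)) := by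
  induction M with
  | zero =>
    intro s n hs
    have hn : ((n:ℚ)+1) ≠ 0 := by positivity
    have c3 : (n.choose s : ℚ) ≠ 0 := by exact_mod_cast (Nat.choose_pos hs).ne'
    simp only [Finset.sum_range_one, Nat.choose_self, Nat.cast_one, zero_add, Nat.add_zero,
      Nat.cast_zero]
    field_simp
  | succ M IH =>
    intro s n hs
    have e1 := choose_rec M (fun Q => 1 / ((M+1+n).choose (s+Q) : ℚ))
    simp only [mul_one_div] at e1
    have r1 : ∀ Q ∈ Finset.range (M+1),
        (M.choose Q : ℚ) / ((M+1+n).choose (s+Q) : ℚ)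
          = (M.choose Q : ℚ) / ((M+(n+1)).choose (s+Q) : ℚ) := by
      intro Q _; rw [show M+1+n = M+(n+1) from by omega]
    have r2 : ∀ Q ∈ Finset.range (M+1),
        (M.choose Q : ℚ) / ((M+1+n).choose (s+(Q+1)) : ℚ)
          = (M.choose Q : ℚ) / ((M+(n+1)).choose ((s+1)+Q) : ℚ) := by
      intro Q _
      rw [show M+1+n = M+(n+1) from by omega, show s+(Q+1) = (s+1)+Q from by omega]
    rw [Finset.sum_congr rfl r1, Finset.sum_congr rfl r2] at e1
    rw [show M+1+1 = M+2 from rfl, e1, IH s (n+1) (by omega), IH (s+1) (n+1) (by omega)]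
    have hinv := inv_id (n+1) s (by omega)
    have c1 : ((n+1).choose s : ℚ) ≠ 0 := by exact_mod_cast (Nat.choose_pos (by omega : s ≤ n+1)).ne'
    have c2 : ((n+1).choose (s+1) : ℚ) ≠ 0 := by exact_mod_cast (Nat.choose_pos (by omega : s+1 ≤ n+1)).ne'
    have c3 : (n.choose s : ℚ) ≠ 0 := by exact_mod_cast (Nat.choose_pos hs).ne'
    have hn1 : ((n+1) - 1 : ℕ) = n := by omega
    rw [hn1] at hinv
    push_cast at hinv ⊢
    have hn : ((n:ℚ)+1) ≠ 0 := by positivity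
    have hn2 : ((n:ℚ)+1+1) ≠ 0 := by positivity
    field_simp at hinv ⊢
    linear_combination ((M:ℚ)+(n:ℚ)+2)*hinv

lemma vander {K : ℕ} (d : Fin K → ℕ) (Q : ℕ) :
    ∑ q ∈ (Fintype.piFinset (fun k => Finset.range (d k + 1))).filter
        (fun q => ∑ k, q k = Q),
      ∏ k, ((d k).choose (q k) : ℚ)
    = ((∑ k, d k).choose Q : ℚ) := by
  have hone : ∀ m : ℕ, ((Polynomial.X + 1 : Polynomial ℚ)) ^ m
      = ∑ j ∈ Finset.range (m+1), Polynomial.C ((m.choose j : ℚ)) * Polynomial.X ^ j := by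
    intro m
    rw [add_pow]
    apply Finset.sum_congr rfl
    intro j _
    simp [mul_comm, Polynomial.C_eq_natCast]
  have hpoly : ((Polynomial.X + 1 : Polynomial ℚ)) ^ (∑ k, d k)
      = ∑ q ∈ Fintype.piFinset (fun k => Finset.range (d k + 1)),
          Polynomial.C (∏ k, ((d k).choose (q k) : ℚ)) * Polynomial.X ^ (∑ k, q k) := by
    rw [← Finset.prod_pow_eq_pow_sum Finset.univ d (Polynomial.X + 1 : Polynomial ℚ)]
    calc ∏ k, ((Polynomial.X + 1 : Polynomial ℚ)) ^ (d k)
        = ∏ k, ∑ j ∈ Finset.range (d k + 1), Polynomial.C (((d k).choose j : ℚ)) * Polynomial.X ^ j := by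
          exact Finset.prod_congr rfl (fun k _ => hone (d k))
      _ = ∑ q ∈ Fintype.piFinset (fun k => Finset.range (d k + 1)),
            ∏ k, (Polynomial.C (((d k).choose (q k) : ℚ)) * Polynomial.X ^ (q k)) :=
          Finset.prod_univ_sum _ _
      _ = _ := by
          apply Finset.sum_congr rfl
          intro q _
          rw [Finset.prod_mul_distrib,
            (map_prod (Polynomial.C : ℚ →+* Polynomial ℚ) (fun k => ((d k).choose (q k) : ℚ)) Finset.univ).symm,
            Finset.prod_pow_eq_pow_sum Finset.univ q Polynomial.X]
  have hc := congrArg (fun p => Polynomial.coeff p Q) hpoly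
  simp only [Polynomial.coeff_X_add_one_pow, Polynomial.finset_sum_coeff,
    Polynomial.coeff_C_mul, Polynomial.coeff_X_pow, mul_ite, mul_one, mul_zero] at hc
  rw [Finset.sum_filter, hc]
  apply Finset.sum_congr rfl
  intro q _
  rcases eq_or_ne (∑ k, q k) Q with h | h
  · simp [h]
  · simp [h, Ne.symm h]

end ShapleyAux

/-- Aggregated Shapley weight over `K` independent blocks:
summing `(∏_{k ≠ k*} C(d_k, q_k)) / C(d-1, s + ∑_{k ≠ k*} q_k)` over all tuples
`(q_k)_{k ≠ k*}` with `0 ≤ q_k ≤ d_k` yields `C(d_{k*}-1, s)⁻¹ · d / d_{k*}`. -/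
theorem shapley_weight_blocks {K : ℕ} (d : Fin K → ℕ) (D : ℕ) (hD : D = ∑ k, d k)
    (kstar : Fin K) (h1 : 1 ≤ d kstar) (s : ℕ) (hs : s ≤ d kstar - 1) :
    ∑ q ∈ (Fintype.piFinset (fun k => Finset.range (d k + 1))).filter
        (fun q => q kstar = 0),
      (∏ k ∈ Finset.univ.erase kstar, (Nat.choose (d k) (q k) : ℚ)) /
        (Nat.choose (D - 1) (s + ∑ k ∈ Finset.univ.erase kstar, q k) : ℚ)
      = ((Nat.choose (d kstar - 1) s : ℚ))⁻¹ * (D : ℚ) / (d kstar : ℚ) := by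
  classical
  set d' : Fin K → ℕ := fun k => if k = kstar then 0 else d k with hd'
  set M : ℕ := ∑ k, d' k with hM
  set n : ℕ := d kstar - 1 with hn
  -- the filtered set is a piFinset
  have hset : (Fintype.piFinset (fun k => Finset.range (d k + 1))).filter
        (fun q => q kstar = 0)
      = Fintype.piFinset (fun k => Finset.range (d' k + 1)) := by
    ext q
    simp only [Finset.mem_filter, Fintype.mem_piFinset, Finset.mem_range, hd']
    constructor
    · rintro ⟨h, h0⟩ k
      by_cases hk : k = kstar
      · subst hk; simp [h0]
      · simpa [hk] using h k
    · intro h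
      constructor
      · intro k
        by_cases hk : k = kstar
        · subst hk; have := h k; simp at this; omega
        · have := h k; simpa [hk] using this
      · have := h kstar; simp at this; omega
  rw [hset]
  -- rewrite summand in terms of d'
  have hsummand : ∀ q ∈ Fintype.piFinset (fun k => Finset.range (d' k + 1)),
      (∏ k ∈ Finset.univ.erase kstar, ((d k).choose (q k) : ℚ)) /
        (((D-1).choose (s + ∑ k ∈ Finset.univ.erase kstar, q k) : ℚ))
      = (∏ k, ((d' k).choose (q k) : ℚ)) / (((D-1).choose (s + ∑ k, q k) : ℚ)) := by
    intro q hq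
    have hq0 : q kstar = 0 := by
      have := Fintype.mem_piFinset.mp hq kstar
      simp [hd'] at this; omega
    have hprod : ∏ k, ((d' k).choose (q k) : ℚ)
        = ∏ k ∈ Finset.univ.erase kstar, ((d k).choose (q k) : ℚ) := by
      rw [← Finset.mul_prod_erase Finset.univ _ (Finset.mem_univ kstar)]
      have : ((d' kstar).choose (q kstar) : ℚ) = 1 := by simp [hd', hq0]
      rw [this, one_mul]
      apply Finset.prod_congr rfl
      intro k hk
      have : k ≠ kstar := (Finset.mem_erase.mp hk).1
      simp [hd', this]
    have hsum : ∑ k, q k = ∑ k ∈ Finset.univ.erase kstar, q k := by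
      rw [← Finset.add_sum_erase Finset.univ q (Finset.mem_univ kstar), hq0, zero_add]
    rw [hprod, hsum]
  rw [Finset.sum_congr rfl hsummand]
  -- fiberwise grouping by total
  have hmaps : ∀ q ∈ Fintype.piFinset (fun k => Finset.range (d' k + 1)),
      (∑ k, q k) ∈ Finset.range (M + 1) := by
    intro q hq
    have : ∀ k, q k ≤ d' k := fun k => by
      have := Fintype.mem_piFinset.mp hq k; simp at this; omega
    have : ∑ k, q k ≤ M := Finset.sum_le_sum (fun k _ => this k)
    simp [Finset.mem_range]; omega
  rw [← Finset.sum_fiberwise_of_maps_to hmaps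
    (fun q => (∏ k, ((d' k).choose (q k) : ℚ)) / (((D-1).choose (s + ∑ k, q k) : ℚ)))]
  -- inner sums
  have hinner : ∀ Q ∈ Finset.range (M+1),
      ∑ q ∈ (Fintype.piFinset (fun k => Finset.range (d' k + 1))).filter
          (fun q => ∑ k, q k = Q),
        (∏ k, ((d' k).choose (q k) : ℚ)) / (((D-1).choose (s + ∑ k, q k) : ℚ))
      = (M.choose Q : ℚ) / (((D-1).choose (s + Q) : ℚ)) := by
    intro Q _
    have : ∀ q ∈ (Fintype.piFinset (fun k => Finset.range (d' k + 1))).filter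
          (fun q => ∑ k, q k = Q),
        (∏ k, ((d' k).choose (q k) : ℚ)) / (((D-1).choose (s + ∑ k, q k) : ℚ))
        = (∏ k, ((d' k).choose (q k) : ℚ)) / (((D-1).choose (s + Q) : ℚ)) := by
      intro q hq
      rw [(Finset.mem_filter.mp hq).2]
    rw [Finset.sum_congr rfl this, ← Finset.sum_div, vander d' Q, ← hM]
  rw [Finset.sum_congr rfl hinner]
  -- arithmetic: D - 1 = M + n
  have hMD : M + d kstar = D := by
    have : ∑ k, d' k = ∑ k ∈ Finset.univ.erase kstar, d k := by
      rw [← Finset.add_sum_erase Finset.univ d' (Finset.mem_univ kstar)]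
      simp only [hd', if_pos rfl, zero_add]
      exact Finset.sum_congr rfl (fun k hk => by simp [(Finset.mem_erase.mp hk).1])
    rw [hM, this, hD, add_comm]
    exact Finset.add_sum_erase Finset.univ d (Finset.mem_univ kstar)
  have hD1 : D - 1 = M + n := by omega
  rw [hD1, key_sum M s n (by omega)]
  have hnn : ((n:ℚ)+1) = (d kstar : ℚ) := by
    have : n + 1 = d kstar := by omega
    exact_mod_cast this
  have hMn : ((M:ℚ)+(n:ℚ)+1) = (D : ℚ) := by
    have : M + n + 1 = D := by omega
    exact_mod_cast this
  rw [hMn, hnn]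
  have c3 : ((n.choose s : ℚ)) ≠ 0 := by exact_mod_cast (Nat.choose_pos (by omega : s ≤ n)).ne'
  have cd : ((d kstar : ℚ)) ≠ 0 := by exact_mod_cast (by omega : d kstar ≠ 0)
  field_simp
end

section
/- Let $X, Z$ be independent random variables, and let $g(X,Z)$ be a square-integrable real-valued function. Then $\mathrm{Var}[\mathbb{E}[g(X,Z) \mid Z]] \leq \mathrm{Var}[\mathbb{E}[g(X,Z) \mid X, Z]] - \mathrm{Var}[\mathbb{E}[g(X,Z) \mid X]] \leq \mathrm{Var}[g(X,Z) - \mathbb{E}_Z[g(X,Z)]]$, where $\mathbb{E}_Z$ denotes expectation over $Z$ only (i.e., conditional expectation given $X$). In particular the middle quantity equals $\mathrm{Var}[g(X,Z)] - \mathrm{Var}[\mathbb{E}[g(X,Z)\mid X]]$. -/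
open MeasureTheory ProbabilityTheory

section Aux

variable {Ω : Type*} {m m0 : MeasurableSpace Ω} {μ : Measure Ω}

lemma aux_integrable_mul [IsFiniteMeasure μ] {f g : Ω → ℝ}
    (hf : MemLp f 2 μ) (hg : MemLp g 2 μ) :
    Integrable (fun ω => f ω * g ω) μ := by
  have h := L2.integrable_inner (𝕜 := ℝ) (hf.toLp f) (hg.toLp g)
  refine h.congr ?_
  filter_upwards [hf.coeFn_toLp, hg.coeFn_toLp] with ω h1 h2
  simp [h1, h2, RCLike.inner_apply, mul_comm]

lemma aux_condexp_memℒp2 [IsProbabilityMeasure μ] (hm : m ≤ m0) {f : Ω → ℝ}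
    (hf : MemLp f 2 μ) : MemLp (μ[f|m]) 2 μ := by
  have hK : ((condExpL2 ℝ ℝ hm (hf.toLp f) : Ω →₂[μ] ℝ) : Ω → ℝ) =ᵐ[μ] μ[f|m] := by
    refine ae_eq_condExp_of_forall_setIntegral_eq hm (hf.integrable one_le_two)
      (fun s _ _ => ((Lp.memLp _).integrable one_le_two).integrableOn)
      (fun s hs hμs => ?_) (aestronglyMeasurable_condExpL2 hm _)
    rw [integral_condExpL2_eq hm (hf.toLp f) hs hμs.ne]
    exact setIntegral_congr_ae (hm s hs) (hf.coeFn_toLp.mono fun x hx _ => hx)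
  exact (Lp.memLp _).ae_eq hK

lemma aux_integral_mul_condexp [IsProbabilityMeasure μ] (hm : m ≤ m0) {f : Ω → ℝ}
    (hf : MemLp f 2 μ) :
    ∫ ω, f ω * (μ[f|m]) ω ∂μ = ∫ ω, ((μ[f|m]) ω) ^ 2 ∂μ := by
  have hK2 : MemLp (μ[f|m]) 2 μ := aux_condexp_memℒp2 hm hf
  have hint : Integrable ((μ[f|m]) * f) μ := aux_integrable_mul hK2 hf
  have hpull : μ[(μ[f|m]) * f|m] =ᵐ[μ] (μ[f|m]) * μ[f|m] :=
    condExp_mul_of_stronglyMeasurable_left stronglyMeasurable_condExp hint (hf.integrable one_le_two)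
  calc ∫ ω, f ω * (μ[f|m]) ω ∂μ = ∫ ω, ((μ[f|m]) * f) ω ∂μ := by
        simp_rw [Pi.mul_apply, mul_comm]
    _ = ∫ ω, (μ[(μ[f|m]) * f|m]) ω ∂μ := (integral_condExp hm).symm
    _ = ∫ ω, ((μ[f|m]) * μ[f|m]) ω ∂μ := integral_congr_ae hpull
    _ = ∫ ω, ((μ[f|m]) ω) ^ 2 ∂μ := by simp_rw [Pi.mul_apply, ← pow_two]

lemma aux_integral_sq_sub [IsProbabilityMeasure μ] (hm : m ≤ m0) {f : Ω → ℝ}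
    (hf : MemLp f 2 μ) :
    ∫ ω, (f ω - (μ[f|m]) ω) ^ 2 ∂μ = ∫ ω, (f ω) ^ 2 ∂μ - ∫ ω, ((μ[f|m]) ω) ^ 2 ∂μ := by
  have hK2 : MemLp (μ[f|m]) 2 μ := aux_condexp_memℒp2 hm hf
  have h1 : Integrable (fun ω => (f ω) ^ 2) μ := hf.integrable_sq
  have h2 : Integrable (fun ω => ((μ[f|m]) ω) ^ 2) μ := hK2.integrable_sq
  have h3 : Integrable (fun ω => f ω * (μ[f|m]) ω) μ := aux_integrable_mul hf hK2
  have hexp : ∀ ω, (f ω - (μ[f|m]) ω) ^ 2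
      = ((f ω) ^ 2 - 2 * (f ω * (μ[f|m]) ω)) + ((μ[f|m]) ω) ^ 2 := fun ω => by ring
  have h4 : Integrable (fun ω => 2 * (f ω * (μ[f|m]) ω)) μ := h3.const_mul 2
  have h5 : Integrable (fun ω => (f ω) ^ 2 - 2 * (f ω * (μ[f|m]) ω)) μ := h1.sub h4
  simp_rw [hexp]
  rw [integral_add h5 h2, integral_sub h1 h4,
    integral_const_mul, aux_integral_mul_condexp hm hf]
  ring

lemma aux_integral_sq_condexp_le [IsProbabilityMeasure μ] (hm : m ≤ m0) {f : Ω → ℝ}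
    (hf : MemLp f 2 μ) :
    ∫ ω, ((μ[f|m]) ω) ^ 2 ∂μ ≤ ∫ ω, (f ω) ^ 2 ∂μ := by
  have h0 : 0 ≤ ∫ ω, (f ω - (μ[f|m]) ω) ^ 2 ∂μ := integral_nonneg fun ω => sq_nonneg _
  have := aux_integral_sq_sub hm hf
  linarith

end Aux

/-- For independent `X, Z` and square-integrable `g(X,Z)`, the conditional variance
increment `Var[E[g|X,Z]] - Var[E[g|X]]` is bracketed between the main-effect variance
`Var[E[g|Z]]` and the total-effect variance `Var[g - E[g|X]]`; moreover it equals
`Var[g] - Var[E[g|X]]`. -/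
theorem shapley_increment_bracket
    {Ω α β : Type*} [MeasurableSpace Ω] [MeasurableSpace α] [MeasurableSpace β]
    (μ : Measure Ω) [IsProbabilityMeasure μ]
    (X : Ω → α) (Z : Ω → β) (hX : Measurable X) (hZ : Measurable Z)
    (hXZ : IndepFun X Z μ)
    (g : α → β → ℝ) (hg : Measurable (Function.uncurry g))
    (G : Ω → ℝ) (hGdef : G = fun ω => g (X ω) (Z ω)) (hG2 : MemLp G 2 μ) :
    variance (μ[G | MeasurableSpace.comap Z inferInstance]) μ ≤
        variance (μ[G | MeasurableSpace.comap (fun ω => (X ω, Z ω)) inferInstance]) μ -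
          variance (μ[G | MeasurableSpace.comap X inferInstance]) μ ∧
    variance (μ[G | MeasurableSpace.comap (fun ω => (X ω, Z ω)) inferInstance]) μ -
        variance (μ[G | MeasurableSpace.comap X inferInstance]) μ ≤
      variance (fun ω => G ω - (μ[G | MeasurableSpace.comap X inferInstance]) ω) μ ∧
    variance (μ[G | MeasurableSpace.comap (fun ω => (X ω, Z ω)) inferInstance]) μ -
        variance (μ[G | MeasurableSpace.comap X inferInstance]) μ =
      variance G μ - variance (μ[G | MeasurableSpace.comap X inferInstance]) μ := by
  rename_i mΩ mα mβ hprob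
  set mX := MeasurableSpace.comap X inferInstance with hmXdef
  set mZ := MeasurableSpace.comap Z inferInstance with hmZdef
  set mXZ := MeasurableSpace.comap (fun ω => (X ω, Z ω)) inferInstance with hmXZdef
  have hmX : mX ≤ mΩ := hX.comap_le
  have hmZ : mZ ≤ mΩ := hZ.comap_le
  have hpairmeas : @Measurable Ω (α × β) mΩ _ (fun ω => (X ω, Z ω)) := hX.prodMk hZ
  have hmXZ : mXZ ≤ mΩ := hpairmeas.comap_le
  have hGint : Integrable G μ := hG2.integrable one_le_two
  -- E[G | σ(X,Z)] = G
  have hGm : Measurable[mXZ] G := by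
    rw [hGdef]
    exact hg.comp (measurable_iff_comap_le.2 le_rfl)
  have hC : μ[G|mXZ] = G :=
    condExp_of_stronglyMeasurable hmXZ hGm.stronglyMeasurable hGint
  rw [hC]
  set A := μ[G|mX] with hAdef
  set B := μ[G|mZ] with hBdef
  have hA2 : MemLp A 2 μ := aux_condexp_memℒp2 hmX hG2
  have hB2 : MemLp B 2 μ := aux_condexp_memℒp2 hmZ hG2
  have hAint : Integrable A μ := integrable_condExp
  have hIA : ∫ ω, A ω ∂μ = ∫ ω, G ω ∂μ := integral_condExp hmX
  have hIB : ∫ ω, B ω ∂μ = ∫ ω, G ω ∂μ := integral_condExp hmZ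
  set mG : ℝ := ∫ ω, G ω ∂μ with hmGdef
  -- variance identities
  have hVG : variance G μ = ∫ ω, (G ω) ^ 2 ∂μ - mG ^ 2 := by
    rw [variance_eq_sub hG2]; simp [hmGdef]
  have hVA : variance A μ = ∫ ω, (A ω) ^ 2 ∂μ - mG ^ 2 := by
    rw [variance_eq_sub hA2]; simp [hIA, hmGdef]
  have hVB : variance B μ = ∫ ω, (B ω) ^ 2 ∂μ - mG ^ 2 := by
    rw [variance_eq_sub hB2]; simp [hIB, hmGdef]
  set H : Ω → ℝ := fun ω => G ω - A ω with hHdef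
  have hH2 : MemLp H 2 μ := hG2.sub hA2
  have hIH : ∫ ω, H ω ∂μ = 0 := by
    rw [hHdef]; rw [integral_sub hGint hAint, hIA]; ring
  have hIH2 : ∫ ω, (H ω) ^ 2 ∂μ = ∫ ω, (G ω) ^ 2 ∂μ - ∫ ω, (A ω) ^ 2 ∂μ :=
    aux_integral_sq_sub hmX hG2
  have hVH : variance H μ = variance G μ - variance A μ := by
    rw [variance_eq_sub hH2, hVG, hVA]
    simp only [Pi.pow_apply]
    rw [hIH2, hIH]
    ring
  refine ⟨?_, le_of_eq hVH.symm, rfl⟩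
  -- first inequality : Var B ≤ Var G - Var A
  -- E[A | mZ] = const mG by independence
  have hindep : ProbabilityTheory.Indep mX mZ μ := (IndepFun_iff_Indep X Z μ).1 hXZ
  have hAZ : μ[A|mZ] =ᵐ[μ] fun _ => mG := by
    have hsm : StronglyMeasurable[mX] A :=
      stronglyMeasurable_condExp (m := mX) (m₀ := mΩ) (μ := μ) (f := G)
    have h : μ[A|mZ] =ᵐ[μ] fun _ => ∫ ω, A ω ∂μ :=
      condExp_indep_eq (f := A) hmX hmZ hsm hindep
    refine h.trans ?_
    filter_upwards with ω
    simp [hIA, hmGdef]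
  have hHZ : μ[H|mZ] =ᵐ[μ] fun ω => B ω - mG := by
    have hsub : μ[H|mZ] =ᵐ[μ] μ[G|mZ] - μ[A|mZ] := condExp_sub hGint hAint mZ
    refine hsub.trans ?_
    filter_upwards [hAZ] with ω hω
    simp [hω, hBdef]
  have hKsq : ∫ ω, ((μ[H|mZ]) ω) ^ 2 ∂μ = ∫ ω, (B ω - mG) ^ 2 ∂μ := by
    refine integral_congr_ae ?_
    filter_upwards [hHZ] with ω hω
    rw [hω]
  have hBsq : ∫ ω, (B ω - mG) ^ 2 ∂μ = ∫ ω, (B ω) ^ 2 ∂μ - mG ^ 2 := by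
    have he : ∀ ω, (B ω - mG) ^ 2 = (B ω) ^ 2 - 2 * mG * B ω + mG ^ 2 := fun ω => by ring
    simp_rw [he]
    have hBsqint : Integrable (fun ω => (B ω) ^ 2) μ := hB2.integrable_sq
    have hBc : Integrable (fun ω => 2 * mG * B ω) μ := integrable_condExp.const_mul _
    have h5 : Integrable (fun ω => (B ω) ^ 2 - 2 * mG * B ω) μ := hBsqint.sub hBc
    rw [integral_add h5 (integrable_const _), integral_sub hBsqint hBc, integral_const_mul, hIB]
    simp [measure_univ]
    ring
  have hcontr : ∫ ω, ((μ[H|mZ]) ω) ^ 2 ∂μ ≤ ∫ ω, (H ω) ^ 2 ∂μ :=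
    aux_integral_sq_condexp_le hmZ hH2
  rw [hVB, ← hVH, variance_eq_sub hH2]
  simp only [Pi.pow_apply]
  rw [hIH]
  calc (∫ ω, (B ω) ^ 2 ∂μ) - mG ^ 2 = ∫ ω, ((μ[H|mZ]) ω) ^ 2 ∂μ := by rw [hKsq, hBsq]
    _ ≤ ∫ ω, (H ω) ^ 2 ∂μ := hcontr
    _ = ∫ ω, (H ω) ^ 2 ∂μ - 0 ^ 2 := by ring
end

section
/- Let $X, Z, W$ be mutually independent square-integrable random variables and $g(X,Z,W)$ a square-integrable function. Then $\mathrm{Var}[\mathbb{E}[g \mid X, Z]] - \mathrm{Var}[\mathbb{E}[g \mid X]] \geq \mathrm{Var}[\mathbb{E}[g \mid Z]]$. -/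
open MeasureTheory ProbabilityTheory

/-- The conditional expectation of an `L²` function is in `L²`. -/
lemma memLp_two_condexp_aux {α : Type*} {m m0 : MeasurableSpace α} {μ : Measure α}
    [IsFiniteMeasure μ] (hm : m ≤ m0) {f : α → ℝ} (hf : MemLp f 2 μ) :
    MemLp (μ[f|m]) 2 μ := by
  have h : ((condExpL2 ℝ ℝ hm (hf.toLp f) : lpMeas ℝ ℝ m 2 μ) : α → ℝ) =ᵐ[μ] μ[f|m] := by
    refine ae_eq_condExp_of_forall_setIntegral_eq hm (hf.integrable one_le_two)
      (fun s hs hμs => integrableOn_condExpL2_of_measure_ne_top hm hμs.ne _)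
      (fun s hs hμs => ?_) (aestronglyMeasurable_condExpL2 hm _)
    rw [integral_condExpL2_eq hm (hf.toLp f) hs hμs.ne]
    exact setIntegral_congr_ae (hm s hs) (hf.coeFn_toLp.mono fun x hx _ => hx)
  exact (Lp.memLp ((condExpL2 ℝ ℝ hm (hf.toLp f) : lpMeas ℝ ℝ m 2 μ) : Lp ℝ 2 μ)).ae_eq h

/-- Product of two `L²` functions is integrable. -/
lemma integrable_mul_of_memLp_two_aux {α : Type*} {m0 : MeasurableSpace α} {μ : Measure α}
    {f g : α → ℝ} (hf : MemLp f 2 μ) (hg : MemLp g 2 μ) :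
    Integrable (fun ω => f ω * g ω) μ := by
  have h : MemLp (f • g) 1 μ := hg.smul hf
  exact memLp_one_iff_integrable.mp h

/-- For mutually independent square-integrable `X, Z, W` and square-integrable
`g(X,Z,W)`, the variance increment from adding `Z` to the conditioning set `{X}`
dominates the main effect of `Z`: `Var[E[g|X,Z]] - Var[E[g|X]] ≥ Var[E[g|Z]]`. -/
theorem variance_increment_ge_main_effect
    {Ω : Type*} [MeasurableSpace Ω] (μ : Measure Ω) [IsProbabilityMeasure μ]
    (X Z W : Ω → ℝ) (hX : Measurable X) (hZ : Measurable Z) (hW : Measurable W)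
    (hX2 : MemLp X 2 μ) (hZ2 : MemLp Z 2 μ) (hW2 : MemLp W 2 μ)
    (hIndep1 : IndepFun X (fun ω => (Z ω, W ω)) μ)
    (hIndep2 : IndepFun Z (fun ω => (X ω, W ω)) μ)
    (hIndep3 : IndepFun W (fun ω => (X ω, Z ω)) μ)
    (g : ℝ → ℝ → ℝ → ℝ) (hg : Measurable fun p : ℝ × ℝ × ℝ => g p.1 p.2.1 p.2.2)
    (G : Ω → ℝ) (hGdef : G = fun ω => g (X ω) (Z ω) (W ω)) (hG2 : MemLp G 2 μ) :
    variance (μ[G | MeasurableSpace.comap (fun ω => (X ω, Z ω)) inferInstance]) μ -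
        variance (μ[G | MeasurableSpace.comap X inferInstance]) μ ≥
      variance (μ[G | MeasurableSpace.comap Z inferInstance]) μ := by
  have hXZmeas : Measurable fun ω => (X ω, Z ω) := hX.prodMk hZ
  have hIndXZfun : IndepFun X Z μ := by
    have := hIndep1.comp measurable_id (measurable_fst : Measurable fun p : ℝ × ℝ => p.1)
    exact this
  have hmXZ : MeasurableSpace.comap (fun ω => (X ω, Z ω)) inferInstance ≤ _ :=
    hXZmeas.comap_le
  have hmX : MeasurableSpace.comap X inferInstance ≤ _ := hX.comap_le
  have hmZ : MeasurableSpace.comap Z inferInstance ≤ _ := hZ.comap_le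
  have hmX_le : MeasurableSpace.comap X inferInstance ≤
      MeasurableSpace.comap (fun ω => (X ω, Z ω)) inferInstance := by
    rw [show X = (fun p : ℝ × ℝ => p.1) ∘ (fun ω => (X ω, Z ω)) from rfl,
      ← MeasurableSpace.comap_comp]
    exact MeasurableSpace.comap_mono measurable_fst.comap_le
  have hmZ_le : MeasurableSpace.comap Z inferInstance ≤
      MeasurableSpace.comap (fun ω => (X ω, Z ω)) inferInstance := by
    rw [show Z = (fun p : ℝ × ℝ => p.2) ∘ (fun ω => (X ω, Z ω)) from rfl,
      ← MeasurableSpace.comap_comp]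
    exact MeasurableSpace.comap_mono measurable_snd.comap_le
  have hIndXZ : Indep (MeasurableSpace.comap X inferInstance)
      (MeasurableSpace.comap Z inferInstance) μ := (IndepFun_iff_Indep X Z μ).mp hIndXZfun
  -- notation
  set A := μ[G|(MeasurableSpace.comap (fun ω => (X ω, Z ω)) inferInstance)] with hAdef
  set B := μ[G|(MeasurableSpace.comap X inferInstance)] with hBdef
  set C := μ[G|(MeasurableSpace.comap Z inferInstance)] with hCdef
  set m := ∫ ω, G ω ∂μ with hmdef
  have hGint : Integrable G μ := hG2.integrable one_le_two
  have hA2 : MemLp A 2 μ := memLp_two_condexp_aux hmXZ hG2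
  have hB2 : MemLp B 2 μ := memLp_two_condexp_aux hmX hG2
  have hC2 : MemLp C 2 μ := memLp_two_condexp_aux hmZ hG2
  have hAint : Integrable A μ := integrable_condExp
  have hBint : Integrable B μ := integrable_condExp
  have hCint : Integrable C μ := integrable_condExp
  have hEA : ∫ ω, A ω ∂μ = m := integral_condExp hmXZ
  have hEB : ∫ ω, B ω ∂μ = m := integral_condExp hmX
  have hEC : ∫ ω, C ω ∂μ = m := integral_condExp hmZ
  -- integrable products
  have iA2 : Integrable (fun ω => A ω ^ 2) μ := hA2.integrable_sq
  have iB2 : Integrable (fun ω => B ω ^ 2) μ := hB2.integrable_sq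
  have iC2 : Integrable (fun ω => C ω ^ 2) μ := hC2.integrable_sq
  have iAB : Integrable (fun ω => A ω * B ω) μ := integrable_mul_of_memLp_two_aux hA2 hB2
  have iAC : Integrable (fun ω => A ω * C ω) μ := integrable_mul_of_memLp_two_aux hA2 hC2
  have iBC : Integrable (fun ω => B ω * C ω) μ := integrable_mul_of_memLp_two_aux hB2 hC2
  -- cross term 1:  E[A·B] = E[B²]
  have hBA : μ[A|(MeasurableSpace.comap X inferInstance)] =ᵐ[μ] B := condExp_condExp_of_le hmX_le hmXZ
  have hAB : ∫ ω, A ω * B ω ∂μ = ∫ ω, B ω ^ 2 ∂μ := by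
    have hmulint : Integrable (B * A) μ := by
      have : B * A = fun ω => B ω * A ω := rfl
      rw [this]
      exact integrable_mul_of_memLp_two_aux hB2 hA2
    have hpull : μ[B * A|(MeasurableSpace.comap X inferInstance)] =ᵐ[μ] B * μ[A|(MeasurableSpace.comap X inferInstance)] :=
      condExp_mul_of_stronglyMeasurable_left stronglyMeasurable_condExp hmulint hAint
    have h1 : ∫ ω, (B * A) ω ∂μ = ∫ ω, (μ[B * A|(MeasurableSpace.comap X inferInstance)]) ω ∂μ :=
      (integral_condExp hmX).symm
    have h2 : ∫ ω, (μ[B * A|(MeasurableSpace.comap X inferInstance)]) ω ∂μ = ∫ ω, B ω * B ω ∂μ := by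
      refine integral_congr_ae ?_
      filter_upwards [hpull, hBA] with ω h1 h2
      simp only [Pi.mul_apply] at h1 ⊢
      rw [h1, h2]
    calc ∫ ω, A ω * B ω ∂μ = ∫ ω, (B * A) ω ∂μ := by
          refine integral_congr_ae (Filter.Eventually.of_forall fun ω => ?_)
          simp [mul_comm]
      _ = ∫ ω, B ω * B ω ∂μ := h1.trans h2
      _ = ∫ ω, B ω ^ 2 ∂μ := by
          refine integral_congr_ae (Filter.Eventually.of_forall fun ω => ?_)
          ring
  -- cross term 2:  E[A·C] = E[C²]
  have hCA : μ[A|(MeasurableSpace.comap Z inferInstance)] =ᵐ[μ] C := condExp_condExp_of_le hmZ_le hmXZ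
  have hAC : ∫ ω, A ω * C ω ∂μ = ∫ ω, C ω ^ 2 ∂μ := by
    have hmulint : Integrable (C * A) μ := by
      have : C * A = fun ω => C ω * A ω := rfl
      rw [this]
      exact integrable_mul_of_memLp_two_aux hC2 hA2
    have hpull : μ[C * A|(MeasurableSpace.comap Z inferInstance)] =ᵐ[μ] C * μ[A|(MeasurableSpace.comap Z inferInstance)] :=
      condExp_mul_of_stronglyMeasurable_left stronglyMeasurable_condExp hmulint hAint
    have h1 : ∫ ω, (C * A) ω ∂μ = ∫ ω, (μ[C * A|(MeasurableSpace.comap Z inferInstance)]) ω ∂μ :=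
      (integral_condExp hmZ).symm
    have h2 : ∫ ω, (μ[C * A|(MeasurableSpace.comap Z inferInstance)]) ω ∂μ = ∫ ω, C ω * C ω ∂μ := by
      refine integral_congr_ae ?_
      filter_upwards [hpull, hCA] with ω h1 h2
      simp only [Pi.mul_apply] at h1 ⊢
      rw [h1, h2]
    calc ∫ ω, A ω * C ω ∂μ = ∫ ω, (C * A) ω ∂μ := by
          refine integral_congr_ae (Filter.Eventually.of_forall fun ω => ?_)
          simp [mul_comm]
      _ = ∫ ω, C ω * C ω ∂μ := h1.trans h2
      _ = ∫ ω, C ω ^ 2 ∂μ := by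
          refine integral_congr_ae (Filter.Eventually.of_forall fun ω => ?_)
          ring
  -- cross term 3:  E[B·C] = m²  (independence)
  have hIndBC : IndepFun B C μ := by
    rw [IndepFun_iff_Indep]
    have hBmX : Measurable[MeasurableSpace.comap X inferInstance] B :=
      stronglyMeasurable_condExp.measurable
    have hCmZ : Measurable[MeasurableSpace.comap Z inferInstance] C :=
      stronglyMeasurable_condExp.measurable
    exact indep_of_indep_of_le_right (indep_of_indep_of_le_left hIndXZ hBmX.comap_le)
      hCmZ.comap_le
  have hBC : ∫ ω, B ω * C ω ∂μ = m * m := by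
    have := hIndBC.integral_mul_eq_mul_integral hBint.aestronglyMeasurable hCint.aestronglyMeasurable
    have heq : ∫ ω, (B * C) ω ∂μ = ∫ ω, B ω * C ω ∂μ := rfl
    rw [heq] at this
    rw [this, hEB, hEC]
  -- the residual D = A - B - C + m has nonnegative square
  set D := fun ω => A ω - B ω - C ω + m with hDdef
  have hD0 : 0 ≤ ∫ ω, D ω ^ 2 ∂μ := integral_nonneg fun ω => sq_nonneg _
  -- expand ∫ D²
  have hKey : ∫ ω, D ω ^ 2 ∂μ =
      (∫ ω, A ω ^ 2 ∂μ) - (∫ ω, B ω ^ 2 ∂μ) - (∫ ω, C ω ^ 2 ∂μ) + m ^ 2 := by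
    have hexp : (fun ω => D ω ^ 2) = fun ω =>
        (A ω ^ 2 + B ω ^ 2 + C ω ^ 2 + m ^ 2 + 2 * m * A ω + 2 * (B ω * C ω))
          - (2 * (A ω * B ω) + 2 * (A ω * C ω) + 2 * m * B ω + 2 * m * C ω) := by
      funext ω; simp only [hDdef]; ring
    have i1 : Integrable (fun ω => A ω ^ 2 + B ω ^ 2) μ := iA2.add iB2
    have i2 : Integrable (fun ω => A ω ^ 2 + B ω ^ 2 + C ω ^ 2) μ := i1.add iC2
    have i3 : Integrable (fun ω => A ω ^ 2 + B ω ^ 2 + C ω ^ 2 + m ^ 2) μ :=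
      i2.add (integrable_const _)
    have i4 : Integrable (fun ω => A ω ^ 2 + B ω ^ 2 + C ω ^ 2 + m ^ 2 + 2 * m * A ω) μ :=
      i3.add (hAint.const_mul _)
    have i5 : Integrable (fun ω => 2 * (B ω * C ω)) μ := iBC.const_mul 2
    have iP : Integrable (fun ω =>
        A ω ^ 2 + B ω ^ 2 + C ω ^ 2 + m ^ 2 + 2 * m * A ω + 2 * (B ω * C ω)) μ := i4.add i5
    have j1 : Integrable (fun ω => 2 * (A ω * B ω)) μ := iAB.const_mul 2
    have j2 : Integrable (fun ω => 2 * (A ω * C ω)) μ := iAC.const_mul 2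
    have j3 : Integrable (fun ω => 2 * m * B ω) μ := hBint.const_mul _
    have j4 : Integrable (fun ω => 2 * m * C ω) μ := hCint.const_mul _
    have j12 : Integrable (fun ω => 2 * (A ω * B ω) + 2 * (A ω * C ω)) μ := j1.add j2
    have j123 : Integrable (fun ω => 2 * (A ω * B ω) + 2 * (A ω * C ω) + 2 * m * B ω) μ :=
      j12.add j3
    have iQ : Integrable (fun ω =>
        2 * (A ω * B ω) + 2 * (A ω * C ω) + 2 * m * B ω + 2 * m * C ω) μ := j123.add j4
    rw [hexp, integral_sub iP iQ, integral_add i4 i5, integral_add i3 (hAint.const_mul _),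
      integral_add i2 (integrable_const _), integral_add i1 iC2, integral_add iA2 iB2,
      integral_add j123 j4, integral_add j12 j3, integral_add j1 j2,
      integral_const_mul, integral_const_mul, integral_const_mul, integral_const_mul,
      integral_const_mul, integral_const_mul, integral_const, hEA, hEB, hEC, hAB, hAC, hBC]
    simp [measure_univ]
    ring
  -- variances via second moments
  have hVA : variance A μ = (∫ ω, A ω ^ 2 ∂μ) - m ^ 2 := by
    rw [variance_eq_sub hA2, hEA]
    rfl
  have hVB : variance B μ = (∫ ω, B ω ^ 2 ∂μ) - m ^ 2 := by
    rw [variance_eq_sub hB2, hEB]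
    rfl
  have hVC : variance C μ = (∫ ω, C ω ^ 2 ∂μ) - m ^ 2 := by
    rw [variance_eq_sub hC2, hEC]
    rfl
  rw [ge_iff_le, hVA, hVB, hVC]
  linarith [hD0, hKey.symm.le]
end

section
/- Let $X$ and $Z$ be independent square-integrable random variables and $f$ square-integrable. Then $\mathrm{Var}[f(X,Z)] = \mathrm{Var}[\mathbb{E}[f(X,Z) \mid X]] + \mathrm{Var}[\mathbb{E}[f(X,Z) \mid Z]] + \mathrm{Var}[f - \mathbb{E}[f\mid X] - \mathbb{E}[f\mid Z] + \mathbb{E}[f]]$, i.e., the two-factor Hoeffding (ANOVA) decomposition of variance holds, and the three summands correspond to mutually uncorrelated components. -/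
open MeasureTheory ProbabilityTheory

lemma aux_integrable_mul_s8 {Ω : Type*} {m0 : MeasurableSpace Ω} {μ : Measure Ω} {p q : Ω → ℝ}
    (hp : MemLp p 2 μ) (hq : MemLp q 2 μ) :
    Integrable (fun ω => p ω * q ω) μ := by
  have h : MemLp (p • q) 1 μ := hq.smul hp
  exact memLp_one_iff_integrable.mp h

lemma memℒp_two_condexp {Ω : Type*} {m m0 : MeasurableSpace Ω} (hm : m ≤ m0)
    (μ : Measure Ω) [IsProbabilityMeasure μ] {F : Ω → ℝ} (hF : MemLp F 2 μ) :
    MemLp (μ[F|m]) 2 μ := by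
  haveI : SigmaFinite (μ.trim hm) := inferInstance
  set G : Ω → ℝ := ((condExpL2 ℝ ℝ hm (hF.toLp F) : Ω →₂[μ] ℝ) : Ω → ℝ) with hG
  have hG2 : MemLp G 2 μ := Lp.memLp _
  have hGe : G =ᵐ[μ] μ[F|m] := by
    refine ae_eq_condExp_of_forall_setIntegral_eq hm (hF.integrable one_le_two)
      (fun s _ _ => (hG2.integrable one_le_two).integrableOn)
      (fun s hs hμs => ?_) ?_
    · rw [hG, integral_condExpL2_eq hm (hF.toLp F) hs hμs.ne]
      exact setIntegral_congr_ae (hm s hs) ((hF.coeFn_toLp).mono fun x hx _ => hx)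
    · exact lpMeas.aestronglyMeasurable _
  exact hG2.ae_eq hGe

/-- Two-factor Hoeffding (ANOVA) decomposition of variance for independent `X, Z` and
square-integrable `f(X,Z)`: the variance splits into the main effects of `X` and `Z` and
the interaction remainder, and the three components are mutually uncorrelated. -/
theorem hoeffding_two_factor
    {Ω α β : Type*} [MeasurableSpace Ω] [MeasurableSpace α] [MeasurableSpace β]
    (μ : Measure Ω) [IsProbabilityMeasure μ]
    (X : Ω → α) (Z : Ω → β) (hX : Measurable X) (hZ : Measurable Z)
    (hXZ : IndepFun X Z μ)
    (f : α → β → ℝ) (hf : Measurable (Function.uncurry f))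
    (F : Ω → ℝ) (hFdef : F = fun ω => f (X ω) (Z ω)) (hF2 : MemLp F 2 μ)
    (f1 f2 f12 : Ω → ℝ)
    (hf1 : f1 = fun ω => (μ[F | MeasurableSpace.comap X inferInstance]) ω - ∫ x, F x ∂μ)
    (hf2 : f2 = fun ω => (μ[F | MeasurableSpace.comap Z inferInstance]) ω - ∫ x, F x ∂μ)
    (hf12 : f12 = fun ω => F ω - (μ[F | MeasurableSpace.comap X inferInstance]) ω -
      (μ[F | MeasurableSpace.comap Z inferInstance]) ω + ∫ x, F x ∂μ) :
    variance F μ =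
        variance (μ[F | MeasurableSpace.comap X inferInstance]) μ +
          variance (μ[F | MeasurableSpace.comap Z inferInstance]) μ +
          variance f12 μ ∧
    (∫ ω, f1 ω * f2 ω ∂μ) = 0 ∧
    (∫ ω, f1 ω * f12 ω ∂μ) = 0 ∧
    (∫ ω, f2 ω * f12 ω ∂μ) = 0 := by
  set m1 : MeasurableSpace Ω := MeasurableSpace.comap X inferInstance with hm1def
  set m2 : MeasurableSpace Ω := MeasurableSpace.comap Z inferInstance with hm2def
  have hm1 : m1 ≤ _ := hX.comap_le
  have hm2 : m2 ≤ _ := hZ.comap_le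
  haveI : SigmaFinite (μ.trim hm1) := inferInstance
  haveI : SigmaFinite (μ.trim hm2) := inferInstance
  set g1 : Ω → ℝ := μ[F|m1] with hg1def
  set g2 : Ω → ℝ := μ[F|m2] with hg2def
  set c : ℝ := ∫ x, F x ∂μ with hcdef
  -- basic facts
  have hFi : Integrable F μ := hF2.integrable one_le_two
  have hg1ℒ : MemLp g1 2 μ := memℒp_two_condexp hm1 μ hF2
  have hg2ℒ : MemLp g2 2 μ := memℒp_two_condexp hm2 μ hF2
  have hg1i : Integrable g1 μ := hg1ℒ.integrable one_le_two
  have hg2i : Integrable g2 μ := hg2ℒ.integrable one_le_two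
  have hg1m : ∫ ω, g1 ω ∂μ = c := integral_condExp hm1
  have hg2m : ∫ ω, g2 ω ∂μ = c := integral_condExp hm2
  have hf1ℒ : MemLp f1 2 μ := by rw [hf1]; exact hg1ℒ.sub (memLp_const c)
  have hf2ℒ : MemLp f2 2 μ := by rw [hf2]; exact hg2ℒ.sub (memLp_const c)
  have hf12ℒ : MemLp f12 2 μ := by
    rw [hf12]; exact ((hF2.sub hg1ℒ).sub hg2ℒ).add (memLp_const c)
  have hf1i : Integrable f1 μ := hf1ℒ.integrable one_le_two
  have hf2i : Integrable f2 μ := hf2ℒ.integrable one_le_two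
  have hf12i : Integrable f12 μ := hf12ℒ.integrable one_le_two
  -- means
  have m_f1 : ∫ ω, f1 ω ∂μ = 0 := by
    rw [hf1, integral_sub hg1i (integrable_const c), hg1m, integral_const]
    simp
  have m_f2 : ∫ ω, f2 ω ∂μ = 0 := by
    rw [hf2, integral_sub hg2i (integrable_const c), hg2m, integral_const]
    simp
  have m_f12 : ∫ ω, f12 ω ∂μ = 0 := by
    have iA : Integrable (fun ω => F ω - g1 ω) μ := hFi.sub hg1i
    have iB : Integrable (fun ω => F ω - g1 ω - g2 ω) μ := iA.sub hg2i
    simp only [hf12]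
    rw [integral_add iB (integrable_const c), integral_sub iA hg2i, integral_sub hFi hg1i,
      hg1m, hg2m, integral_const]
    simp [hcdef]
  -- independence helper
  have indep_int : ∀ (p q : Ω → ℝ), Measurable[m1] p → Measurable[m2] q →
      MemLp p 2 μ → MemLp q 2 μ →
      ∫ ω, p ω * q ω ∂μ = (∫ ω, p ω ∂μ) * (∫ ω, q ω ∂μ) := by
    intro p q hpm hqm hp2 hq2
    have hInd : Indep m1 m2 μ := (IndepFun_iff_Indep X Z μ).mp hXZ
    have hpq : IndepFun p q μ := by
      rw [IndepFun_iff_Indep]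
      exact indep_of_indep_of_le_left (indep_of_indep_of_le_right hInd hqm.comap_le)
        hpm.comap_le
    exact hpq.integral_mul_eq_mul_integral (hp2.integrable one_le_two).1 (hq2.integrable one_le_two).1
  -- pull-out helpers
  have pull1 : ∀ (p : Ω → ℝ), StronglyMeasurable[m1] p → MemLp p 2 μ →
      ∫ ω, p ω * F ω ∂μ = ∫ ω, p ω * g1 ω ∂μ := by
    intro p hpm hp2
    have hmul : Integrable (p * F) μ := aux_integrable_mul_s8 hp2 hF2
    have h := condExp_mul_of_stronglyMeasurable_left (m := m1) (μ := μ) hpm hmul hFi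
    calc ∫ ω, p ω * F ω ∂μ = ∫ ω, (μ[p * F|m1]) ω ∂μ := (integral_condExp hm1).symm
      _ = ∫ ω, (p * g1) ω ∂μ := integral_congr_ae h
      _ = ∫ ω, p ω * g1 ω ∂μ := rfl
  have pull2 : ∀ (p : Ω → ℝ), StronglyMeasurable[m2] p → MemLp p 2 μ →
      ∫ ω, p ω * F ω ∂μ = ∫ ω, p ω * g2 ω ∂μ := by
    intro p hpm hp2
    have hmul : Integrable (p * F) μ := aux_integrable_mul_s8 hp2 hF2
    have h := condExp_mul_of_stronglyMeasurable_left (m := m2) (μ := μ) hpm hmul hFi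
    calc ∫ ω, p ω * F ω ∂μ = ∫ ω, (μ[p * F|m2]) ω ∂μ := (integral_condExp hm2).symm
      _ = ∫ ω, (p * g2) ω ∂μ := integral_congr_ae h
      _ = ∫ ω, p ω * g2 ω ∂μ := rfl
  -- measurability of components
  have sm_g1 : StronglyMeasurable[m1] g1 := stronglyMeasurable_condExp
  have sm_g2 : StronglyMeasurable[m2] g2 := stronglyMeasurable_condExp
  have sm_f1 : StronglyMeasurable[m1] f1 := by
    rw [hf1]; exact sm_g1.sub stronglyMeasurable_const
  have sm_f2 : StronglyMeasurable[m2] f2 := by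
    rw [hf2]; exact sm_g2.sub stronglyMeasurable_const
  -- orthogonality of f1, f2
  have O12 : ∫ ω, f1 ω * f2 ω ∂μ = 0 := by
    rw [indep_int f1 f2 sm_f1.measurable sm_f2.measurable hf1ℒ hf2ℒ, m_f1, zero_mul]
  -- cross products with g's
  have h_f1g2 : ∫ ω, f1 ω * g2 ω ∂μ = 0 := by
    rw [indep_int f1 g2 sm_f1.measurable sm_g2.measurable hf1ℒ hg2ℒ, m_f1, zero_mul]
  have h_f2g1 : ∫ ω, f2 ω * g1 ω ∂μ = 0 := by
    calc ∫ ω, f2 ω * g1 ω ∂μ = ∫ ω, g1 ω * f2 ω ∂μ :=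
        integral_congr_ae (Filter.Eventually.of_forall fun ω => mul_comm _ _)
      _ = 0 := by
        rw [indep_int g1 f2 sm_g1.measurable sm_f2.measurable hg1ℒ hf2ℒ, m_f2, mul_zero]
  have h_f1F : ∫ ω, f1 ω * F ω ∂μ = ∫ ω, f1 ω * g1 ω ∂μ := pull1 f1 sm_f1 hf1ℒ
  have h_f2F : ∫ ω, f2 ω * F ω ∂μ = ∫ ω, f2 ω * g2 ω ∂μ := pull2 f2 sm_f2 hf2ℒ
  -- generic expansion of ∫ p * f12
  have expand : ∀ (p : Ω → ℝ), MemLp p 2 μ →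
      ∫ ω, p ω * f12 ω ∂μ = ∫ ω, p ω * F ω ∂μ - ∫ ω, p ω * g1 ω ∂μ -
        ∫ ω, p ω * g2 ω ∂μ + c * ∫ ω, p ω ∂μ := by
    intro p hp2
    have e : (fun ω => p ω * f12 ω) =
        fun ω => ((p ω * F ω - p ω * g1 ω) - p ω * g2 ω) + c * p ω := by
      funext ω; simp only [hf12]; ring
    have iF : Integrable (fun ω => p ω * F ω) μ := aux_integrable_mul_s8 hp2 hF2
    have i1 : Integrable (fun ω => p ω * g1 ω) μ := aux_integrable_mul_s8 hp2 hg1ℒ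
    have i2 : Integrable (fun ω => p ω * g2 ω) μ := aux_integrable_mul_s8 hp2 hg2ℒ
    have ip : Integrable p μ := hp2.integrable one_le_two
    have iA : Integrable (fun ω => p ω * F ω - p ω * g1 ω) μ := iF.sub i1
    have iB : Integrable (fun ω => p ω * F ω - p ω * g1 ω - p ω * g2 ω) μ := iA.sub i2
    rw [e, integral_add iB (ip.const_mul c), integral_sub iA i2, integral_sub iF i1,
      integral_const_mul]
  -- orthogonality with f12
  have O1 : ∫ ω, f1 ω * f12 ω ∂μ = 0 := by
    rw [expand f1 hf1ℒ, h_f1F, h_f1g2, m_f1]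
    ring
  have O2 : ∫ ω, f2 ω * f12 ω ∂μ = 0 := by
    rw [expand f2 hf2ℒ, h_f2F, h_f2g1, m_f2]
    ring
  refine ⟨?_, O12, O1, O2⟩
  -- variance decomposition
  have h_g1F : ∫ ω, g1 ω * F ω ∂μ = ∫ ω, g1 ω * g1 ω ∂μ := pull1 g1 sm_g1 hg1ℒ
  have h_g2F : ∫ ω, g2 ω * F ω ∂μ = ∫ ω, g2 ω * g2 ω ∂μ := pull2 g2 sm_g2 hg2ℒ
  have h_g1g2 : ∫ ω, g1 ω * g2 ω ∂μ = c * c := by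
    rw [indep_int g1 g2 sm_g1.measurable sm_g2.measurable hg1ℒ hg2ℒ, hg1m, hg2m]
  -- ∫ f12 * g1 = 0 and ∫ f12 * g2 = 0
  have h_f12g1 : ∫ ω, f12 ω * g1 ω ∂μ = 0 := by
    have e : (fun ω => f12 ω * g1 ω) = fun ω => f1 ω * f12 ω + c * f12 ω := by
      funext ω; simp only [hf1]; ring
    rw [e, integral_add (aux_integrable_mul_s8 hf1ℒ hf12ℒ) (hf12i.const_mul c),
      integral_const_mul, O1, m_f12]
    ring
  have h_f12g2 : ∫ ω, f12 ω * g2 ω ∂μ = 0 := by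
    have e : (fun ω => f12 ω * g2 ω) = fun ω => f2 ω * f12 ω + c * f12 ω := by
      funext ω; simp only [hf2]; ring
    rw [e, integral_add (aux_integrable_mul_s8 hf2ℒ hf12ℒ) (hf12i.const_mul c),
      integral_const_mul, O2, m_f12]
    ring
  -- ∫ f12 * F
  have h_f12F : ∫ ω, f12 ω * F ω ∂μ = ∫ ω, F ω * F ω ∂μ - ∫ ω, g1 ω * F ω ∂μ -
      ∫ ω, g2 ω * F ω ∂μ + c * c := by
    have e : (fun ω => f12 ω * F ω) =
        fun ω => ((F ω * F ω - g1 ω * F ω) - g2 ω * F ω) + c * F ω := by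
      funext ω; simp only [hf12]; ring
    have iFF : Integrable (fun ω => F ω * F ω) μ := aux_integrable_mul_s8 hF2 hF2
    have i1F : Integrable (fun ω => g1 ω * F ω) μ := aux_integrable_mul_s8 hg1ℒ hF2
    have i2F : Integrable (fun ω => g2 ω * F ω) μ := aux_integrable_mul_s8 hg2ℒ hF2
    have iA : Integrable (fun ω => F ω * F ω - g1 ω * F ω) μ := iFF.sub i1F
    have iB : Integrable (fun ω => F ω * F ω - g1 ω * F ω - g2 ω * F ω) μ := iA.sub i2F
    rw [e, integral_add iB (hFi.const_mul c), integral_sub iA i2F, integral_sub iFF i1F,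
      integral_const_mul, ← hcdef]
  -- second moment of f12
  have h_f12sq : ∫ ω, f12 ω * f12 ω ∂μ = ∫ ω, F ω * F ω ∂μ - ∫ ω, g1 ω * g1 ω ∂μ -
      ∫ ω, g2 ω * g2 ω ∂μ + c * c := by
    rw [expand f12 hf12ℒ, h_f12F, h_f12g1, h_f12g2, m_f12, h_g1F, h_g2F]
    ring
  -- variances via second moments
  have sq_int : ∀ (p : Ω → ℝ), (∫ ω, (p ^ 2) ω ∂μ) = ∫ ω, p ω * p ω ∂μ := by
    intro p; congr 1; funext ω; simp [pow_two]
  have vF : variance F μ = ∫ ω, F ω * F ω ∂μ - c * c := by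
    rw [variance_eq_sub hF2, sq_int]; rw [← hcdef]; ring
  have v1 : variance g1 μ = ∫ ω, g1 ω * g1 ω ∂μ - c * c := by
    rw [variance_eq_sub hg1ℒ, sq_int, hg1m]; ring
  have v2 : variance g2 μ = ∫ ω, g2 ω * g2 ω ∂μ - c * c := by
    rw [variance_eq_sub hg2ℒ, sq_int, hg2m]; ring
  have v12 : variance f12 μ = ∫ ω, f12 ω * f12 ω ∂μ := by
    rw [variance_eq_sub hf12ℒ, sq_int, m_f12]; ring
  rw [vF, v1, v2, v12, h_f12sq]
  ring
end

section
/- Let $R : \Omega \to \mathbb{R}^n$ be square-integrable of the form $R = r(X,Z,W)$ with $X, Z, W, Z'$ mutually independent and $Z' \stackrel{d}{=} Z$. Then $\mathbb{E}\left[\| r(X,Z,W) - r(X,Z',W) \|^2\right] = 2\, \mathrm{tr}\left( \mathrm{Var}[r(X,Z,W)] - \mathrm{Var}\big[\mathbb{E}_Z[r(X,Z,W)]\big] \right)$, i.e., twice the trace of the total-effect covariance of $Z$ for the vector-valued map $r$. -/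
open MeasureTheory ProbabilityTheory Finset

private lemma sq_integral_le_integral_sq {β : Type*} [MeasurableSpace β] {ν : Measure β}
    [IsProbabilityMeasure ν] {f : β → ℝ} (hf : MemLp f 2 ν) :
    (∫ z, f z ∂ν) ^ 2 ≤ ∫ z, f z ^ 2 ∂ν := by
  have h := variance_nonneg f ν
  rw [variance_eq_sub hf] at h
  simp only [Pi.pow_apply] at h
  linarith

private lemma one_div_one_eq' : (1 : ENNReal) / 1 = 1 / 2 + 1 / 2 := by
  have : (1:ENNReal)/2 + 1/2 = (1+1)/2 := ENNReal.div_add_div_same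
  rw [this]
  norm_num
  rw [ENNReal.div_self] <;> norm_num

private lemma integrable_mul_of_memLp_two {α : Type*} [MeasurableSpace α] {μ : Measure α}
    {f g : α → ℝ} (hf : MemLp f 2 μ) (hg : MemLp g 2 μ) :
    Integrable (fun x => f x * g x) μ := by
  have h : MemLp (f • g) 1 μ := hg.smul hf (hpqr := ⟨by simpa [one_div] using one_div_one_eq'.symm⟩)
  rw [memLp_one_iff_integrable] at h
  exact h

private lemma aux_key {Ω AC B : Type*} [MeasurableSpace Ω] [MeasurableSpace AC]
    [MeasurableSpace B] (μ : Measure Ω) [IsProbabilityMeasure μ]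
    (π : Ω → AC) (ζ ζ' : Ω → B) (F : AC × B → ℝ)
    (hπ : Measurable π) (hζ : Measurable ζ) (hζ' : Measurable ζ') (hFm : Measurable F)
    (hT1 : μ.map (fun ω => (π ω, ζ ω)) = (μ.map π).prod (μ.map ζ))
    (hT2 : μ.map (fun ω => (π ω, ζ' ω)) = (μ.map π).prod (μ.map ζ))
    (hT3 : μ.map (fun ω => (π ω, (ζ ω, ζ' ω)))
      = (μ.map π).prod ((μ.map ζ).prod (μ.map ζ)))
    (hf2 : MemLp (fun ω => F (π ω, ζ ω)) 2 μ) :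
    ∫ ω, (F (π ω, ζ ω) - F (π ω, ζ' ω)) ^ 2 ∂μ =
      2 * (variance (fun ω => F (π ω, ζ ω)) μ -
        variance (μ[(fun ω => F (π ω, ζ ω)) |
          MeasurableSpace.comap π inferInstance]) μ) := by
  have hm : MeasurableSpace.comap π inferInstance ≤ ‹MeasurableSpace Ω› :=
    measurable_iff_comap_le.mp hπ
  haveI : SigmaFinite (μ.trim hm) := inferInstance
  set ν : Measure B := μ.map ζ with hνdef
  set ρ : Measure AC := μ.map π with hρdef
  haveI : IsProbabilityMeasure ν := Measure.isProbabilityMeasure_map hζ.aemeasurable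
  haveI : IsProbabilityMeasure ρ := Measure.isProbabilityMeasure_map hπ.aemeasurable
  have hPπ : MeasurePreserving π μ ρ := ⟨hπ, rfl⟩
  set g : AC → ℝ := fun p => ∫ z, F (p, z) ∂ν with hgdef
  have hFL2 : MemLp F 2 (ρ.prod ν) := by
    rw [← hT1, memLp_map_measure_iff hFm.aestronglyMeasurable
      (hπ.prodMk hζ).aemeasurable]
    exact hf2
  have hf'2 : MemLp (fun ω => F (π ω, ζ' ω)) 2 μ := by
    have h := hFL2
    rw [← hT2, memLp_map_measure_iff hFm.aestronglyMeasurable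
      (hπ.prodMk hζ').aemeasurable] at h
    exact h
  have hFint : Integrable F (ρ.prod ν) := hFL2.integrable one_le_two
  have hFsq : Integrable (fun q => F q ^ 2) (ρ.prod ν) := hFL2.integrable_sq
  have hgm : StronglyMeasurable g := hFm.stronglyMeasurable.integral_prod_right'
  have hsec : ∀ᵐ p ∂ρ, MemLp (fun z => F (p, z)) 2 ν := by
    filter_upwards [hFsq.prod_right_ae] with p h1
    exact (memLp_two_iff_integrable_sq
      ((hFm.comp measurable_prodMk_left).aestronglyMeasurable)).mpr h1
  have hgsq : Integrable (fun p => g p ^ 2) ρ := by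
    refine Integrable.mono' hFsq.integral_prod_left
      ((hgm.measurable.pow_const 2).aestronglyMeasurable) ?_
    filter_upwards [hsec] with p hp
    rw [Real.norm_eq_abs, abs_of_nonneg (sq_nonneg _)]
    exact sq_integral_le_integral_sq hp
  have hg2 : MemLp g 2 ρ := (memLp_two_iff_integrable_sq hgm.aestronglyMeasurable).mpr hgsq
  have hgπ2 : MemLp (fun ω => g (π ω)) 2 μ := hg2.comp_measurePreserving hPπ
  -- the conditional expectation is g ∘ π
  have hcond : (fun ω => g (π ω)) =ᵐ[μ]
      μ[(fun ω => F (π ω, ζ ω)) | MeasurableSpace.comap π inferInstance] := by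
    refine ae_eq_condExp_of_forall_setIntegral_eq hm (hf2.integrable one_le_two)
      (fun s hs hμs => (hgπ2.integrable one_le_two).integrableOn) ?_ ?_
    · rintro s ⟨A, hA, rfl⟩ hμs
      have hl : ∫ ω in π ⁻¹' A, g (π ω) ∂μ = ∫ p in A, g p ∂ρ := by
        rw [hρdef, setIntegral_map hA hgm.aestronglyMeasurable hπ.aemeasurable]
      have hpre : (fun ω => (π ω, ζ ω)) ⁻¹' (A ×ˢ Set.univ) = π ⁻¹' A := by
        ext ω; simp
      have hrr : ∫ ω in π ⁻¹' A, F (π ω, ζ ω) ∂μ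
          = ∫ q in A ×ˢ Set.univ, F q ∂(ρ.prod ν) := by
        rw [← hT1, setIntegral_map (hA.prod MeasurableSet.univ) hFm.aestronglyMeasurable
          (hπ.prodMk hζ).aemeasurable, hpre]
      have hps : (ρ.prod ν).restrict (A ×ˢ Set.univ) = (ρ.restrict A).prod ν := by
        rw [← Measure.prod_restrict, Measure.restrict_univ]
      have hAint : Integrable F ((ρ.restrict A).prod ν) := by
        rw [← hps]
        exact hFint.integrableOn
      rw [hl, hrr]
      show ∫ p in A, g p ∂ρ = ∫ q, F q ∂((ρ.prod ν).restrict (A ×ˢ Set.univ))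
      rw [hps, integral_prod _ hAint]
    · have hπmm : Measurable[MeasurableSpace.comap π inferInstance] π :=
        measurable_iff_comap_le.mpr le_rfl
      exact (hgm.comp_measurable hπmm).aestronglyMeasurable
  -- transfer of second moments
  have hIf2 : ∫ q, F q ^ 2 ∂(ρ.prod ν) = ∫ ω, F (π ω, ζ ω) ^ 2 ∂μ := by
    rw [← hT1]
    exact integral_map (hπ.prodMk hζ).aemeasurable
      ((hFm.pow_const 2).aestronglyMeasurable)
  have hIf'2 : ∫ q, F q ^ 2 ∂(ρ.prod ν) = ∫ ω, F (π ω, ζ' ω) ^ 2 ∂μ := by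
    rw [← hT2]
    exact integral_map (hπ.prodMk hζ').aemeasurable
      ((hFm.pow_const 2).aestronglyMeasurable)
  -- the mixed moment
  have hPfst : MeasurePreserving (fun q : AC × B × B => (q.1, q.2.1))
      (ρ.prod (ν.prod ν)) (ρ.prod ν) :=
    (MeasurePreserving.id ρ).prod
      (⟨measurable_fst, by rw [Measure.map_fst_prod]; simp⟩ :
        MeasurePreserving (Prod.fst : B × B → B) (ν.prod ν) ν)
  have hPsnd : MeasurePreserving (fun q : AC × B × B => (q.1, q.2.2))
      (ρ.prod (ν.prod ν)) (ρ.prod ν) :=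
    (MeasurePreserving.id ρ).prod
      (⟨measurable_snd, by rw [Measure.map_snd_prod]; simp⟩ :
        MeasurePreserving (Prod.snd : B × B → B) (ν.prod ν) ν)
  have hH1 : MemLp (fun q : AC × B × B => F (q.1, q.2.1)) 2 (ρ.prod (ν.prod ν)) :=
    hFL2.comp_measurePreserving hPfst
  have hH2 : MemLp (fun q : AC × B × B => F (q.1, q.2.2)) 2 (ρ.prod (ν.prod ν)) :=
    hFL2.comp_measurePreserving hPsnd
  have hHint : Integrable (fun q : AC × B × B => F (q.1, q.2.1) * F (q.1, q.2.2))
      (ρ.prod (ν.prod ν)) := integrable_mul_of_memLp_two hH1 hH2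
  have hff' : ∫ ω, F (π ω, ζ ω) * F (π ω, ζ' ω) ∂μ = ∫ p, g p ^ 2 ∂ρ := by
    have h0 : ∫ q, F (q.1, q.2.1) * F (q.1, q.2.2) ∂(ρ.prod (ν.prod ν))
        = ∫ ω, F (π ω, ζ ω) * F (π ω, ζ' ω) ∂μ := by
      rw [← hT3]
      exact integral_map (hπ.prodMk (hζ.prodMk hζ')).aemeasurable
        ((hFm.comp (measurable_fst.prodMk measurable_snd.fst)).mul
          (hFm.comp (measurable_fst.prodMk measurable_snd.snd))).aestronglyMeasurable
    rw [← h0, integral_prod _ hHint]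
    refine integral_congr_ae (Filter.Eventually.of_forall fun p => ?_)
    have h2 := integral_prod_mul (μ := ν) (ν := ν) (fun z => F (p, z)) (fun z => F (p, z))
    simpa [pow_two] using h2
  -- expansion of the square
  have hfmul : Integrable (fun ω => F (π ω, ζ ω) * F (π ω, ζ' ω)) μ :=
    integrable_mul_of_memLp_two hf2 hf'2
  have h1 : Integrable (fun ω => F (π ω, ζ ω) ^ 2) μ := hf2.integrable_sq
  have h2 : Integrable (fun ω => F (π ω, ζ' ω) ^ 2) μ := hf'2.integrable_sq
  have hexp : ∫ ω, (F (π ω, ζ ω) - F (π ω, ζ' ω)) ^ 2 ∂μ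
      = 2 * ((∫ ω, F (π ω, ζ ω) ^ 2 ∂μ) - ∫ p, g p ^ 2 ∂ρ) := by
    have heq : (fun ω => (F (π ω, ζ ω) - F (π ω, ζ' ω)) ^ 2)
        = fun ω => (F (π ω, ζ ω) ^ 2 + F (π ω, ζ' ω) ^ 2)
          - 2 * (F (π ω, ζ ω) * F (π ω, ζ' ω)) := by
      funext ω; ring
    have h12 : Integrable (fun ω => F (π ω, ζ ω) ^ 2 + F (π ω, ζ' ω) ^ 2) μ := h1.add h2
    have h3 : Integrable (fun ω => 2 * (F (π ω, ζ ω) * F (π ω, ζ' ω))) μ := hfmul.const_mul 2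
    rw [heq, integral_sub h12 h3, integral_add h1 h2,
      integral_const_mul, hff', ← hIf'2, hIf2]
    ring
  -- variances
  have hc2 : MemLp (μ[(fun ω => F (π ω, ζ ω)) |
      MeasurableSpace.comap π inferInstance]) 2 μ := hgπ2.ae_eq hcond
  have hVf : variance (fun ω => F (π ω, ζ ω)) μ
      = (∫ ω, F (π ω, ζ ω) ^ 2 ∂μ) - (∫ ω, F (π ω, ζ ω) ∂μ) ^ 2 := by
    rw [variance_eq_sub hf2]
    simp only [Pi.pow_apply]
  have hVc : variance (μ[(fun ω => F (π ω, ζ ω)) |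
        MeasurableSpace.comap π inferInstance]) μ
      = (∫ p, g p ^ 2 ∂ρ) - (∫ ω, F (π ω, ζ ω) ∂μ) ^ 2 := by
    rw [variance_eq_sub hc2]
    simp only [Pi.pow_apply]
    rw [integral_condExp hm]
    congr 1
    have hsq : ∫ ω, (μ[(fun ω => F (π ω, ζ ω)) |
          MeasurableSpace.comap π inferInstance]) ω ^ 2 ∂μ
        = ∫ ω, g (π ω) ^ 2 ∂μ :=
      integral_congr_ae (hcond.symm.fun_comp (fun x : ℝ => x ^ 2))
    rw [hsq]
    exact (integral_map hπ.aemeasurable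
      ((hgm.measurable.pow_const 2).aestronglyMeasurable)).symm
  rw [hexp, hVf, hVc]
  ring

/-- I.i.d.-copy identity for the total generalized sensitivity index of a vector-valued
map: `E[‖r(X,Z,W) - r(X,Z',W)‖²] = 2 tr(Var[r(X,Z,W)] - Var[E_Z[r(X,Z,W)]])`, where the
trace of the covariance matrix is the sum of componentwise variances and `E_Z` is the
conditional expectation given `(X, W)`. -/
theorem iid_copy_trace_identity
    {Ω α β γ : Type*} [MeasurableSpace Ω] [MeasurableSpace α] [MeasurableSpace β]
    [MeasurableSpace γ] (μ : Measure Ω) [IsProbabilityMeasure μ] {n : ℕ}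
    (X : Ω → α) (Z Z' : Ω → β) (W : Ω → γ)
    (hX : Measurable X) (hZ : Measurable Z) (hZ' : Measurable Z') (hW : Measurable W)
    (hIndep1 : IndepFun X (fun ω => (Z ω, W ω)) μ)
    (hIndep2 : IndepFun Z (fun ω => (X ω, W ω)) μ)
    (hIndep3 : IndepFun W (fun ω => (X ω, Z ω)) μ)
    (hcopy : IdentDistrib Z Z' μ μ)
    (hIndepZ' : IndepFun Z' (fun ω => (X ω, Z ω, W ω)) μ)
    (r : α → β → γ → (Fin n → ℝ))
    (hr : Measurable fun q : α × β × γ => r q.1 q.2.1 q.2.2)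
    (hr2 : ∀ i, MemLp (fun ω => r (X ω) (Z ω) (W ω) i) 2 μ) :
    ∫ ω, ∑ i, (r (X ω) (Z ω) (W ω) i - r (X ω) (Z' ω) (W ω) i) ^ 2 ∂μ =
      2 * ((∑ i, variance (fun ω => r (X ω) (Z ω) (W ω) i) μ) -
        ∑ i, variance
          (μ[(fun ω => r (X ω) (Z ω) (W ω) i) |
            MeasurableSpace.comap (fun ω => (X ω, W ω)) inferInstance]) μ) := by
  classical
  have hπm : Measurable (fun ω => (X ω, W ω)) := hX.prodMk hW
  have hT1 : μ.map (fun ω => ((X ω, W ω), Z ω))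
      = (μ.map (fun ω => (X ω, W ω))).prod (μ.map Z) :=
    (indepFun_iff_map_prod_eq_prod_map_map hπm.aemeasurable hZ.aemeasurable).mp hIndep2.symm
  have h1 : IndepFun (fun ω => ((X ω, W ω), Z ω)) Z' μ := by
    have hψ : Measurable fun q : α × β × γ => ((q.1, q.2.2), q.2.1) :=
      (measurable_fst.prodMk measurable_snd.snd).prodMk measurable_snd.fst
    exact (hIndepZ'.comp measurable_id hψ).symm
  have h2 : μ.map (fun ω => (((X ω, W ω), Z ω), Z' ω))
      = ((μ.map (fun ω => (X ω, W ω))).prod (μ.map Z)).prod (μ.map Z) := by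
    rw [(indepFun_iff_map_prod_eq_prod_map_map ((hπm.prodMk hZ).aemeasurable)
      hZ'.aemeasurable).mp h1, hT1, ← hcopy.map_eq]
  have hT3 : μ.map (fun ω => ((X ω, W ω), (Z ω, Z' ω)))
      = (μ.map (fun ω => (X ω, W ω))).prod ((μ.map Z).prod (μ.map Z)) := by
    have he : (fun ω => ((X ω, W ω), (Z ω, Z' ω))) =
        (MeasurableEquiv.prodAssoc : ((α × γ) × β) × β ≃ᵐ (α × γ) × β × β) ∘
          (fun ω => (((X ω, W ω), Z ω), Z' ω)) := rfl
    rw [he, ← Measure.map_map MeasurableEquiv.prodAssoc.measurable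
      ((hπm.prodMk hZ).prodMk hZ'), h2, Measure.prodAssoc_prod]
  have hT2 : μ.map (fun ω => ((X ω, W ω), Z' ω))
      = (μ.map (fun ω => (X ω, W ω))).prod (μ.map Z) := by
    have he : (fun ω => ((X ω, W ω), Z' ω)) =
        (Prod.map (id : α × γ → α × γ) (Prod.snd : β × β → β)) ∘
          (fun ω => ((X ω, W ω), (Z ω, Z' ω))) := rfl
    haveI : IsProbabilityMeasure (μ.map Z) := Measure.isProbabilityMeasure_map hZ.aemeasurable
    rw [he, ← Measure.map_map (measurable_id.prodMap measurable_snd)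
      (hπm.prodMk (hZ.prodMk hZ')), hT3, ← Measure.map_prod_map _ _ measurable_id
      measurable_snd, Measure.map_id]
    congr 1
    simp
  have hF : ∀ i, Measurable fun q : (α × γ) × β => r q.1.1 q.2 q.1.2 i := by
    intro i
    have hre : Measurable fun q : (α × γ) × β => (q.1.1, q.2, q.1.2) :=
      (measurable_fst.fst).prodMk (measurable_snd.prodMk measurable_fst.snd)
    exact (measurable_pi_apply i).comp (hr.comp hre)
  have key : ∀ i, ∫ ω, (r (X ω) (Z ω) (W ω) i - r (X ω) (Z' ω) (W ω) i) ^ 2 ∂μ =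
      2 * (variance (fun ω => r (X ω) (Z ω) (W ω) i) μ -
        variance (μ[(fun ω => r (X ω) (Z ω) (W ω) i) |
          MeasurableSpace.comap (fun ω => (X ω, W ω)) inferInstance]) μ) := fun i =>
    aux_key μ (fun ω => (X ω, W ω)) Z Z' (fun q => r q.1.1 q.2 q.1.2 i)
      hπm hZ hZ' (hF i) hT1 hT2 hT3 (hr2 i)
  have hf'2 : ∀ i, MemLp (fun ω => r (X ω) (Z' ω) (W ω) i) 2 μ := by
    intro i
    have h : MemLp (fun q : (α × γ) × β => r q.1.1 q.2 q.1.2 i) 2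
        ((μ.map (fun ω => (X ω, W ω))).prod (μ.map Z)) := by
      rw [← hT1, memLp_map_measure_iff ((hF i).aestronglyMeasurable)
        (hπm.prodMk hZ).aemeasurable]
      exact hr2 i
    rw [← hT2, memLp_map_measure_iff ((hF i).aestronglyMeasurable)
      (hπm.prodMk hZ').aemeasurable] at h
    exact h
  have hsint : ∀ i, Integrable
      (fun ω => (r (X ω) (Z ω) (W ω) i - r (X ω) (Z' ω) (W ω) i) ^ 2) μ :=
    fun i => ((hr2 i).sub (hf'2 i)).integrable_sq
  rw [integral_finset_sum _ (fun i _ => hsint i), ← Finset.sum_sub_distrib, Finset.mul_sum]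
  exact Finset.sum_congr rfl fun i _ => key i
end
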